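/- Let n ≥ 1, let C be a cyclic ZMod 2-submodule of (Fin n → ZMod 2), and let p, q ∈ {0, 1, …, n−1} with p > q. Then v_p + v_q ∈ C if and only if v_{p−q} ∈ C. (This is the cyclic reduction step used in the proof of Lemma 3 of the paper: the sum v_p + v_q is the indicator of a consecutive block of p − q coordinates, hence a cyclic shift of the consecutive tail vector v_{p−q}, and membership in a cyclic code is invariant under cyclic shifts.) -/

import Mathlib

/-- The consecutive tail vector `v_p`: indicator of the last `p` coordinates. -/
def tailVec (n p : ℕ) : Fin n → ZMod 2 := fun j => if n - p ≤ j.val then 1 else 0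

/-- Left cyclic shift by `l` of a vector `v : Fin n → ZMod 2`. -/
def shiftL {n : ℕ} (v : Fin n → ZMod 2) (l : ℕ) : Fin n → ZMod 2 :=
  fun j => v ⟨(j.val + l) % n, Nat.mod_lt _ j.pos⟩

/-- A code is cyclic if it is invariant under left cyclic shifts. -/
def IsCyclicCode {n : ℕ} (C : Submodule (ZMod 2) (Fin n → ZMod 2)) : Prop :=
  ∀ v ∈ C, ∀ l : ℕ, shiftL v l ∈ C

/-- The dual code `C⊥` with respect to the standard bilinear form. -/
def dualCode {n : ℕ} (C : Submodule (ZMod 2) (Fin n → ZMod 2)) :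
    Submodule (ZMod 2) (Fin n → ZMod 2) where
  carrier := {u | ∀ w ∈ C, ∑ j, u j * w j = 0}
  add_mem' := by
    intro a b ha hb w hw
    simp only [Set.mem_setOf_eq, Pi.add_apply, add_mul] at *
    rw [Finset.sum_add_distrib, ha w hw, hb w hw, add_zero]
  zero_mem' := by
    intro w hw
    simp
  smul_mem' := by
    intro c a ha w hw
    simp only [Set.mem_setOf_eq, Pi.smul_apply, smul_eq_mul, mul_assoc] at *
    rw [← Finset.mul_sum, ha w hw, mul_zero]

/-!
`v_p + v_q` is the indicator of the block of coordinates `n - p ≤ j < n - q`, which is `v_{p-q}`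
shifted left by `q`. A cyclic code is also closed under right shifts, since a left shift by a
multiple of `n` is the identity.
-/

section
variable {n : ℕ}

theorem shiftL_shiftL (v : Fin n → ZMod 2) (a b : ℕ) :
    shiftL (shiftL v a) b = shiftL v (a + b) := by
  funext j
  simp only [shiftL, Nat.mod_add_mod, Nat.add_right_comm _ b a, Nat.add_assoc]

theorem shiftL_mul_self (v : Fin n → ZMod 2) (k : ℕ) : shiftL v (n * k) = v := by
  funext j
  simp only [shiftL, Nat.add_mul_mod_self_left, Nat.mod_eq_of_lt j.isLt]

theorem IsCyclicCode.shiftL_mem_iff {C : Submodule (ZMod 2) (Fin n → ZMod 2)}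
    (hC : IsCyclicCode C) {v : Fin n → ZMod 2} {l : ℕ} : shiftL v l ∈ C ↔ v ∈ C := by
  refine ⟨fun h => ?_, fun h => hC v h l⟩
  rcases n with _ | m
  · rwa [Subsingleton.elim v (shiftL v l)]
  · have h' := hC _ h (m * l)
    rwa [shiftL_shiftL, Nat.add_comm l, ← Nat.add_one_mul, shiftL_mul_self] at h'

end

theorem tailVec_add_tailVec {n p q : ℕ} (hqp : q ≤ p) (hpn : p ≤ n) :
    tailVec n p + tailVec n q = shiftL (tailVec n (p - q)) q := by
  funext j
  have hj := j.isLt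
  simp only [Pi.add_apply, tailVec, shiftL]
  rcases Nat.lt_or_ge (j.val + q) n with h | h
  · simp only [Nat.mod_eq_of_lt h]
    split_ifs <;> first | omega | decide
  · simp only [Nat.mod_eq_sub_mod h, Nat.mod_eq_of_lt (show j.val + q - n < n by omega)]
    split_ifs <;> first | omega | decide

theorem stmt13_general (n : ℕ) (C : Submodule (ZMod 2) (Fin n → ZMod 2))
    (hC : IsCyclicCode C) (p q : ℕ) (hp : p < n) (hpq : p > q) :
    tailVec n p + tailVec n q ∈ C ↔ tailVec n (p - q) ∈ C := by
  rw [tailVec_add_tailVec hpq.le hp.le]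
  exact hC.shiftL_mem_iff

theorem stmt13 (n : ℕ) (hn : 1 ≤ n) (C : Submodule (ZMod 2) (Fin n → ZMod 2))
    (hC : IsCyclicCode C) (p q : ℕ) (hp : p < n) (hq : q < n) (hpq : p > q) :
    tailVec n p + tailVec n q ∈ C ↔ tailVec n (p - q) ∈ C :=
  stmt13_general n C hC p q hp hpq
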